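/- arXiv:2305.16358 — 2 statements merged into one kernel-verified Lean document; each statement's English description precedes it below -/
import Mathlib

section
/- Let C ⊆ ℝ^d be a nonempty compact convex set with support function F(θ) = sup_{y∈C} ⟨θ, y⟩, and let C(p) ⊆ C be a nonempty compact convex subset. Let θ ∈ ℝ^d be a point at which the maximizer y*(θ) = argmax_{y∈C} ⟨θ, y⟩ and the constrained maximizer y*(θ; p) = argmax_{y∈C(p)} ⟨θ, y⟩ are both unique. Then the partial Fenchel–Young loss L̄_FY(·, p) is differentiable at θ with gradient ∇_θ L̄_FY(θ, p) = y*(θ) − y*(θ; p). -/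
open RealInnerProductSpace Set

/-- The support function of a set `C`: `F(θ) = sup_{y ∈ C} ⟨θ, y⟩`. -/
noncomputable def suppFn {d : ℕ} (C : Set (EuclideanSpace ℝ (Fin d)))
    (θ : EuclideanSpace ℝ (Fin d)) : ℝ :=
  sSup ((fun y => ⟪θ, y⟫) '' C)

/-- The partial Fenchel–Young loss:
`L̄_FY(θ, p) = min_{y ∈ C(p)} (F(θ) − ⟨θ, y⟩)`, where `F` is the support function of `C`. -/
noncomputable def partialFY {d : ℕ} (C Cp : Set (EuclideanSpace ℝ (Fin d)))
    (θ : EuclideanSpace ℝ (Fin d)) : ℝ :=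
  sInf ((fun y => suppFn C θ - ⟪θ, y⟫) '' Cp)

/-!
By Danskin's theorem the support function `F` of `C` is differentiable wherever `⟨θ, ·⟩` has a
unique maximizer `y*` on `C`, with gradient `y*`: if `y'` maximizes `⟨θ', ·⟩`, then
`0 ≤ F θ' - F θ - ⟨y*, θ' - θ⟩ = ⟨θ', y' - y*⟩ ≤ ⟨θ' - θ, y' - y*⟩`, and `y' → y*` as `θ' → θ`
because, by compactness, `⟨θ, ·⟩` stays a fixed amount below its maximum away from `y*`.
Since `L̄_FY(θ, p) = F θ - F_p θ` for the support function `F_p` of `C(p)`, the gradient of the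
loss is `y*(θ) - y*(θ; p)`.
-/

open Filter Topology

theorem HasGradientAt.sub {F : Type*} [NormedAddCommGroup F] [InnerProductSpace ℝ F]
    [CompleteSpace F] {f g : F → ℝ} {f' g' x : F} (hf : HasGradientAt f f' x)
    (hg : HasGradientAt g g' x) : HasGradientAt (fun x => f x - g x) (f' - g') x := by
  rw [hasGradientAt_iff_hasFDerivAt, map_sub]
  exact hf.hasFDerivAt.sub hg.hasFDerivAt

section UniqueMaximizer

variable {E : Type*} [NormedAddCommGroup E] [InnerProductSpace ℝ E] {C : Set E} {θ y₀ : E}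

theorem exists_pos_forall_inner_add_le_of_isMaxOn (hC : IsCompact C) (hy₀ : y₀ ∈ C)
    (hmax : IsMaxOn (⟪θ, ·⟫) C y₀) (huniq : ∀ y ∈ C, IsMaxOn (⟪θ, ·⟫) C y → y = y₀)
    {ε : ℝ} (hε : 0 < ε) :
    ∃ g > 0, ∀ y ∈ C, ε ≤ ‖y - y₀‖ → ⟪θ, y⟫ + g ≤ ⟪θ, y₀⟫ := by
  set K := C ∩ {y | ε ≤ ‖y - y₀‖}
  rcases K.eq_empty_or_nonempty with hK | hK
  · exact ⟨1, one_pos, fun y hy hyε => (hK.subset ⟨hy, hyε⟩).elim⟩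
  have hKcpt : IsCompact K := hC.inter_right (isClosed_le (by fun_prop) (by fun_prop))
  obtain ⟨y₁, ⟨hy₁, hy₁ε⟩, hy₁max⟩ := hKcpt.exists_isMaxOn (f := (⟪θ, ·⟫)) hK (by fun_prop)
  have hy₁ne : y₁ ≠ y₀ := by
    rintro rfl
    simp only [mem_ofPred_eq, sub_self, norm_zero] at hy₁ε
    linarith
  have hlt : ⟪θ, y₁⟫ < ⟪θ, y₀⟫ := by
    refine (hmax hy₁).lt_of_ne fun heq => hy₁ne (huniq y₁ hy₁ fun y hy => ?_)
    exact (hmax hy).trans heq.ge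
  refine ⟨⟪θ, y₀⟫ - ⟪θ, y₁⟫, sub_pos.2 hlt, fun y hy hyε => ?_⟩
  have : ⟪θ, y⟫ ≤ ⟪θ, y₁⟫ := hy₁max ⟨hy, hyε⟩
  linarith

theorem eventually_forall_isMaxOn_norm_sub_le (hC : IsCompact C) (hy₀ : y₀ ∈ C)
    (hmax : IsMaxOn (⟪θ, ·⟫) C y₀) (huniq : ∀ y ∈ C, IsMaxOn (⟪θ, ·⟫) C y → y = y₀)
    {ε : ℝ} (hε : 0 < ε) :
    ∀ᶠ θ' in 𝓝 θ, ∀ y ∈ C, IsMaxOn (⟪θ', ·⟫) C y → ‖y - y₀‖ ≤ ε := by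
  obtain ⟨g, hg, hgap⟩ := exists_pos_forall_inner_add_le_of_isMaxOn hC hy₀ hmax huniq hε
  obtain ⟨R, hR⟩ := hC.isBounded.subset_closedBall y₀
  have hnear : ∀ᶠ θ' in 𝓝 θ, ‖θ' - θ‖ * R < g :=
    (continuous_id.sub continuous_const).norm.mul continuous_const |>.continuousAt.eventually_lt
      continuousAt_const (by simpa using hg)
  filter_upwards [hnear] with θ' hθ' y hy hymax
  by_contra! hfar
  have hyR : ‖y - y₀‖ ≤ R := by simpa [dist_eq_norm] using hR hy
  have hθ'y : ⟪θ', y₀⟫ ≤ ⟪θ', y⟫ := hymax hy₀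
  have hθy := hgap y hy hfar.le
  have : g ≤ ⟪θ' - θ, y - y₀⟫ := by
    simp only [inner_sub_left, inner_sub_right]
    linarith
  have : ⟪θ' - θ, y - y₀⟫ ≤ ‖θ' - θ‖ * R :=
    (real_inner_le_norm _ _).trans (mul_le_mul_of_nonneg_left hyR (norm_nonneg _))
  linarith

end UniqueMaximizer

section SupportFunction

variable {d : ℕ} {C : Set (EuclideanSpace ℝ (Fin d))} {θ y₀ : EuclideanSpace ℝ (Fin d)}

theorem suppFn_eq_of_isMaxOn (hy₀ : y₀ ∈ C) (hmax : IsMaxOn (⟪θ, ·⟫) C y₀) :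
    suppFn C θ = ⟪θ, y₀⟫ :=
  IsGreatest.csSup_eq ⟨mem_image_of_mem _ hy₀, forall_mem_image.2 hmax⟩

theorem exists_isMaxOn_inner (hC : IsCompact C) (hne : C.Nonempty)
    (θ : EuclideanSpace ℝ (Fin d)) : ∃ y ∈ C, IsMaxOn (⟪θ, ·⟫) C y :=
  hC.exists_isMaxOn hne (by fun_prop)

theorem hasGradientAt_suppFn (hC : IsCompact C) (hy₀ : y₀ ∈ C)
    (hmax : IsMaxOn (⟪θ, ·⟫) C y₀) (huniq : ∀ y ∈ C, IsMaxOn (⟪θ, ·⟫) C y → y = y₀) :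
    HasGradientAt (suppFn C) y₀ θ := by
  rw [hasGradientAt_iff_isLittleO, Asymptotics.isLittleO_iff]
  intro c hc
  filter_upwards [eventually_forall_isMaxOn_norm_sub_le hC hy₀ hmax huniq hc] with θ' hθ'
  obtain ⟨y, hy, hymax⟩ := exists_isMaxOn_inner hC ⟨y₀, hy₀⟩ θ'
  have hdiff : suppFn C θ' - suppFn C θ - ⟪y₀, θ' - θ⟫ = ⟪θ', y - y₀⟫ := by
    rw [suppFn_eq_of_isMaxOn hy hymax, suppFn_eq_of_isMaxOn hy₀ hmax, real_inner_comm (θ' - θ) y₀,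
      inner_sub_left, inner_sub_right]
    ring
  have hlow : 0 ≤ ⟪θ', y - y₀⟫ := by
    rw [inner_sub_right]
    exact sub_nonneg.2 (hymax hy₀)
  have hup : ⟪θ', y - y₀⟫ ≤ ⟪θ' - θ, y - y₀⟫ := by
    have : ⟪θ, y⟫ ≤ ⟪θ, y₀⟫ := hmax hy
    simp only [inner_sub_left, inner_sub_right]
    linarith
  rw [hdiff, Real.norm_eq_abs, abs_of_nonneg hlow]
  calc ⟪θ', y - y₀⟫ ≤ ⟪θ' - θ, y - y₀⟫ := hup
    _ ≤ ‖θ' - θ‖ * ‖y - y₀‖ := real_inner_le_norm _ _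
    _ ≤ c * ‖θ' - θ‖ := by
      rw [mul_comm]
      exact mul_le_mul_of_nonneg_right (hθ' y hy hymax) (norm_nonneg _)

theorem partialFY_eq_suppFn_sub {Cp : Set (EuclideanSpace ℝ (Fin d))} (hCp : IsCompact Cp)
    (hne : Cp.Nonempty) : partialFY C Cp = fun θ => suppFn C θ - suppFn Cp θ := by
  funext θ
  obtain ⟨y, hy, hymax⟩ := exists_isMaxOn_inner hCp hne θ
  rw [suppFn_eq_of_isMaxOn hy hymax]
  refine IsLeast.csInf_eq ⟨⟨y, hy, rfl⟩, ?_⟩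
  rintro _ ⟨z, hz, rfl⟩
  exact sub_le_sub_left (hymax hz) _

end SupportFunction

theorem partialFY_hasGradientAt_general {d : ℕ}
    (C Cp : Set (EuclideanSpace ℝ (Fin d)))
    (hCcpt : IsCompact C)
    (hCpcpt : IsCompact Cp)
    (θ ystar ystarp : EuclideanSpace ℝ (Fin d))
    (hy : ystar ∈ C) (hymax : ∀ y ∈ C, ⟪θ, y⟫ ≤ ⟪θ, ystar⟫)
    (hyuniq : ∀ y ∈ C, (∀ y' ∈ C, ⟪θ, y'⟫ ≤ ⟪θ, y⟫) → y = ystar)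
    (hyp : ystarp ∈ Cp) (hypmax : ∀ y ∈ Cp, ⟪θ, y⟫ ≤ ⟪θ, ystarp⟫)
    (hypuniq : ∀ y ∈ Cp, (∀ y' ∈ Cp, ⟪θ, y'⟫ ≤ ⟪θ, y⟫) → y = ystarp) :
    HasGradientAt (partialFY C Cp) (ystar - ystarp) θ := by
  rw [partialFY_eq_suppFn_sub hCpcpt ⟨ystarp, hyp⟩]
  exact (hasGradientAt_suppFn hCcpt hy hymax hyuniq).sub
    (hasGradientAt_suppFn hCpcpt hyp hypmax hypuniq)

/-- Let `C ⊆ ℝ^d` be a nonempty compact convex set, `C(p) ⊆ C` a nonempty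
compact convex subset, and `θ` a point where the maximizer `y*(θ)` of `⟨θ, ·⟩` over `C` and
the constrained maximizer `y*(θ; p)` over `C(p)` are both unique. Then the partial
Fenchel–Young loss `L̄_FY(·, p)` is differentiable at `θ` with gradient `y*(θ) − y*(θ; p)`. -/
theorem partialFY_hasGradientAt {d : ℕ}
    (C Cp : Set (EuclideanSpace ℝ (Fin d)))
    (hCne : C.Nonempty) (hCcpt : IsCompact C) (hCcvx : Convex ℝ C)
    (hCpne : Cp.Nonempty) (hCpcpt : IsCompact Cp) (hCpcvx : Convex ℝ Cp)
    (hsub : Cp ⊆ C)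
    (θ ystar ystarp : EuclideanSpace ℝ (Fin d))
    (hy : ystar ∈ C) (hymax : ∀ y ∈ C, ⟪θ, y⟫ ≤ ⟪θ, ystar⟫)
    (hyuniq : ∀ y ∈ C, (∀ y' ∈ C, ⟪θ, y'⟫ ≤ ⟪θ, y⟫) → y = ystar)
    (hyp : ystarp ∈ Cp) (hypmax : ∀ y ∈ Cp, ⟪θ, y⟫ ≤ ⟪θ, ystarp⟫)
    (hypuniq : ∀ y ∈ Cp, (∀ y' ∈ Cp, ⟪θ, y'⟫ ≤ ⟪θ, y⟫) → y = ystarp) :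
    HasGradientAt (partialFY C Cp) (ystar - ystarp) θ :=
  partialFY_hasGradientAt_general C Cp hCcpt hCpcpt θ ystar ystarp hy hymax hyuniq hyp hypmax
    hypuniq
end

section
/- Let Y ⊆ ℝ^d be a finite set with at least one element and Y_p ⊆ Y a nonempty subset, let C = conv(Y) and C(p) = conv(Y_p), let F(θ) = max_{y∈Y} ⟨θ, y⟩ and F(θ; p) = max_{y∈Y_p} ⟨θ, y⟩, let Z be a standard Gaussian random vector on ℝ^d, and let ε > 0. Then the perturbed partial Fenchel–Young loss L̄_{FY,ε}(θ, p) = E[F(θ + εZ) − F(θ + εZ; p)] is differentiable in θ with gradient ∇_θ L̄_{FY,ε}(θ, p) = y*_ε(θ) − y*_ε(θ; p), where y*_ε(θ) = E[argmax_{y∈Y} ⟨y, θ + εZ⟩] and y*_ε(θ; p) = E[argmax_{y∈Y_p} ⟨y, θ + εZ⟩] (the argmaxes being almost surely unique). -/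
/-!
For almost every value of the noise the scores `⟪y, θ + εZ⟫`, `y ∈ Y`, are pairwise distinct:
a coincidence `⟪y - y', θ + εZ⟫ = 0` is a hyperplane event, which is null for the Gaussian `Z`.
The maximizer is then strict, so near `θ + εZ` the support function agrees with the linear map
`⟪·, y*⟫` and has gradient `y*`. Support functions of `Y` are Lipschitz with constant
`max_{y ∈ Y} ‖y‖` and `Z` is integrable, so the gradient may be taken under the expectation.
-/

open RealInnerProductSpace MeasureTheory ProbabilityTheory Set Filter Topology

theorem Set.InjOn.lt_of_forall_le {α β : Type*} [LinearOrder β] {f : α → β} {s : Set α}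
    (hinj : InjOn f s) {b y : α} (hb : b ∈ s) (hmax : ∀ y ∈ s, f y ≤ f b) (hy : y ∈ s)
    (hyb : y ≠ b) : f y < f b :=
  (hmax y hy).lt_of_ne fun h => hyb (hinj hy hb h)

theorem Finset.existsUnique_forall_le_of_injOn {α β : Type*} [LinearOrder β] {f : α → β}
    {s : Finset α} (hs : s.Nonempty) (hinj : InjOn f s) :
    ∃! b, b ∈ s ∧ ∀ y ∈ s, f y ≤ f b := by
  obtain ⟨b, hb, hmax⟩ := s.exists_max_image f hs
  exact ⟨b, ⟨hb, hmax⟩, fun c ⟨hc, hcmax⟩ =>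
    by_contra fun hcb => (hinj.lt_of_forall_le hb hmax hc hcb).not_ge (hcmax b hb)⟩

section SupportFunction

variable {E : Type*} [NormedAddCommGroup E] [InnerProductSpace ℝ E]

noncomputable def supportFun (s : Finset E) (x : E) : ℝ :=
  sSup ((fun y => ⟪x, y⟫) '' (s : Set E))

theorem supportFun_eq_inner_of_forall_le {s : Finset E} {x b : E} (hb : b ∈ s)
    (hmax : ∀ y ∈ s, ⟪y, x⟫ ≤ ⟪b, x⟫) : supportFun s x = ⟪x, b⟫ := by
  refine le_antisymm (csSup_le ⟨_, mem_image_of_mem _ hb⟩ ?_)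
    (le_csSup (s.finite_toSet.image _).bddAbove (mem_image_of_mem _ hb))
  rintro _ ⟨y, hy, rfl⟩
  simpa only [real_inner_comm x] using hmax y hy

theorem inner_le_supportFun {s : Finset E} {y : E} (hy : y ∈ s) (x : E) :
    ⟪x, y⟫ ≤ supportFun s x :=
  le_csSup (s.finite_toSet.image _).bddAbove (mem_image_of_mem _ hy)

theorem lipschitzWith_supportFun (s : Finset E) :
    LipschitzWith (s.sup (‖·‖₊)) (supportFun s) := by
  rcases s.eq_empty_or_nonempty with rfl | hs
  · simp [supportFun]
  refine LipschitzWith.of_le_add_mul _ fun x x' => ?_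
  obtain ⟨b, hb, hmax⟩ := s.exists_max_image (fun y => ⟪y, x⟫) hs
  have hbK : ‖b‖ ≤ s.sup (‖·‖₊) := by exact_mod_cast Finset.le_sup (f := (‖·‖₊)) hb
  calc supportFun s x = ⟪x', b⟫ + ⟪x - x', b⟫ := by
        rw [supportFun_eq_inner_of_forall_le hb hmax, inner_sub_left]; ring
    _ ≤ supportFun s x' + s.sup (‖·‖₊) * dist x x' := by
        gcongr
        · exact inner_le_supportFun hb x'
        · rw [dist_eq_norm, mul_comm]
          exact (real_inner_le_norm _ _).trans (by gcongr)

theorem supportFun_zero (s : Finset E) : supportFun s 0 = 0 := by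
  rcases s.eq_empty_or_nonempty with rfl | hs
  · simp [supportFun]
  · obtain ⟨b, hb⟩ := hs
    simpa using supportFun_eq_inner_of_forall_le (x := 0) hb (by simp)

theorem hasFDerivAt_supportFun {s : Finset E} {x b : E} (hb : b ∈ s)
    (hlt : ∀ y ∈ s, y ≠ b → ⟪y, x⟫ < ⟪b, x⟫) :
    HasFDerivAt (supportFun s) (innerSL ℝ b) x := by
  have hlocal : ∀ᶠ x' in 𝓝 x, ∀ y ∈ s, ⟪y, x'⟫ ≤ ⟪b, x'⟫ := by
    rw [eventually_all_finset]
    intro y hy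
    rcases eq_or_ne y b with rfl | hyb
    · exact Eventually.of_forall fun _ => le_rfl
    · exact ((continuous_const.inner continuous_id).tendsto x).eventually_lt
        ((continuous_const.inner continuous_id).tendsto x) (hlt y hy hyb) |>.mono fun _ => le_of_lt
  refine (innerSL ℝ b).hasFDerivAt.congr_of_eventuallyEq ?_
  filter_upwards [hlocal] with x' hx'
  rw [supportFun_eq_inner_of_forall_le hb hx', innerSL_apply_apply, real_inner_comm]

end SupportFunction

section StrictArgmax

variable {E : Type*} [NormedAddCommGroup E] [InnerProductSpace ℝ E]

/-- A measurable selection of the argmax: the strict maximizer when there is one, `0` otherwise. -/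
noncomputable def strictArgmax (s : Finset E) (x : E) : E :=
  ∑ y ∈ s, {z : E | ∀ y' ∈ s, y' ≠ y → ⟪y', z⟫ < ⟪y, z⟫}.indicator (fun _ => y) x

theorem strictArgmax_eq {s : Finset E} {x b : E} (hb : b ∈ s)
    (hlt : ∀ y ∈ s, y ≠ b → ⟪y, x⟫ < ⟪b, x⟫) : strictArgmax s x = b := by
  rw [strictArgmax, Finset.sum_eq_single_of_mem b hb fun y hy hyb => ?_]
  · exact if_pos hlt
  · exact if_neg fun hx => (hlt y hy hyb).not_gt (hx b hb hyb.symm)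

theorem strictArgmax_eq_of_injOn {s : Finset E} {x b : E}
    (hinj : InjOn (fun y => ⟪y, x⟫) s) (hb : b ∈ s) (hmax : ∀ y ∈ s, ⟪y, x⟫ ≤ ⟪b, x⟫) :
    strictArgmax s x = b :=
  strictArgmax_eq hb fun _ hy hyb => hinj.lt_of_forall_le hb hmax hy hyb

theorem stronglyMeasurable_strictArgmax [MeasurableSpace E] [OpensMeasurableSpace E]
    (s : Finset E) : StronglyMeasurable (strictArgmax s) := by
  have hcell : ∀ y, MeasurableSet {z : E | ∀ y' ∈ s, y' ≠ y → ⟪y', z⟫ < ⟪y, z⟫} := fun y => by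
    simp only [ofPred_forall]
    refine .biInter s.countable_toSet fun y' _ => .iInter fun _ => measurableSet_lt ?_ ?_ <;>
      exact (continuous_const.inner continuous_id).measurable
  exact Finset.stronglyMeasurable_fun_sum _ fun y _ =>
    stronglyMeasurable_const.indicator (hcell y)

theorem strictArgmax_mem_and_hasFDerivAt {s : Finset E} (hs : s.Nonempty) {x : E}
    (hinj : InjOn (fun y => ⟪y, x⟫) s) :
    strictArgmax s x ∈ s ∧ HasFDerivAt (supportFun s) (innerSL ℝ (strictArgmax s x)) x := by
  obtain ⟨b, hb, hmax⟩ := s.exists_max_image (fun y => ⟪y, x⟫) hs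
  have hlt : ∀ y ∈ s, y ≠ b → ⟪y, x⟫ < ⟪b, x⟫ := fun _ hy hyb => hinj.lt_of_forall_le hb hmax hy hyb
  rw [strictArgmax_eq hb hlt]
  exact ⟨hb, hasFDerivAt_supportFun hb hlt⟩

end StrictArgmax

theorem HasGradientAt.fun_sub {E : Type*} [NormedAddCommGroup E] [InnerProductSpace ℝ E]
    [CompleteSpace E] {f g : E → ℝ} {f' g' x : E} (hf : HasGradientAt f f' x)
    (hg : HasGradientAt g g' x) : HasGradientAt (fun t => f t - g t) (f' - g') x := by
  rw [hasGradientAt_iff_hasFDerivAt, map_sub]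
  exact hf.hasFDerivAt.sub hg.hasFDerivAt

section Integral

variable {E : Type*} [NormedAddCommGroup E] [InnerProductSpace ℝ E]
  {Ω : Type*} [MeasurableSpace Ω] {μ : Measure Ω} [IsFiniteMeasure μ] {W : Ω → E}

theorem integrable_supportFun_add (s : Finset E) (hW : Integrable W μ) (t : E) :
    Integrable (fun ω => supportFun s (t + W ω)) μ := by
  set K : NNReal := s.sup (‖·‖₊)
  have hlip : LipschitzWith K (supportFun s) := lipschitzWith_supportFun s
  refine (((integrable_const ‖t‖).add hW.norm).const_mul K).mono'
    (hlip.continuous.comp_aestronglyMeasurable (hW.aestronglyMeasurable.const_add t))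
    (Eventually.of_forall fun ω => ?_)
  simpa [supportFun_zero] using (hlip.dist_le_mul (t + W ω) 0).trans
    (by gcongr; simpa using norm_add_le t (W ω))

theorem hasGradientAt_integral_supportFun [CompleteSpace E] [MeasurableSpace E] [BorelSpace E]
    {s : Finset E} (hs : s.Nonempty) (hW : Integrable W μ) {θ : E}
    (hinj : ∀ᵐ ω ∂μ, InjOn (fun y => ⟪y, θ + W ω⟫) s) :
    HasGradientAt (fun t => ∫ ω, supportFun s (t + W ω) ∂μ)
      (∫ ω, strictArgmax s (θ + W ω) ∂μ) θ := by
  set K : NNReal := s.sup (‖·‖₊)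
  have hmeas : AEStronglyMeasurable (fun ω => strictArgmax s (θ + W ω)) μ :=
    (stronglyMeasurable_strictArgmax s).aestronglyMeasurable.comp_aemeasurable
      (hW.aestronglyMeasurable.const_add θ).aemeasurable
  have hint : Integrable (fun ω => strictArgmax s (θ + W ω)) μ := by
    refine .of_bound hmeas K ?_
    filter_upwards [hinj] with ω hω
    exact_mod_cast Finset.le_sup (f := (‖·‖₊)) (strictArgmax_mem_and_hasFDerivAt hs hω).1
  have hderiv := hasFDerivAt_integral_of_dominated_loc_of_lip'
    (F := fun t ω => supportFun s (t + W ω)) (F' := fun ω => innerSL ℝ (strictArgmax s (θ + W ω)))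
    (bound := fun _ => K) univ_mem
    (fun t _ => (integrable_supportFun_add s hW t).aestronglyMeasurable)
    (integrable_supportFun_add s hW θ) ((innerSL ℝ).continuous.comp_aestronglyMeasurable hmeas)
    (Eventually.of_forall fun ω t _ => by
      simpa [dist_eq_norm] using (lipschitzWith_supportFun s).dist_le_mul (t + W ω) (θ + W ω))
    (integrable_const _)
    (hinj.mono fun ω hω => (hasFDerivAt_comp_add_right (W ω)).2
      (strictArgmax_mem_and_hasFDerivAt hs hω).2)
  have := hderiv.2
  rwa [(innerSL ℝ).integral_comp_comm hint] at this

end Integral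

section Gaussian

variable {E : Type*} [NormedAddCommGroup E] [InnerProductSpace ℝ E] [FiniteDimensional ℝ E]
  [MeasurableSpace E] [BorelSpace E]

theorem ae_inner_ne_stdGaussian {w : E} (hw : w ≠ 0) (c : ℝ) :
    ∀ᵐ x ∂stdGaussian E, ⟪w, x⟫ ≠ c := by
  have hlaw : (stdGaussian E).map (innerSL ℝ w) = gaussianReal 0 (‖w‖ ^ 2).toNNReal := by
    rw [IsGaussian.map_eq_gaussianReal, integral_strongDual_stdGaussian,
      variance_dual_stdGaussian, innerSL_apply_norm]
  have : NullSingletonClass (gaussianReal 0 (‖w‖ ^ 2).toNNReal) :=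
    nullSingletonClass_gaussianReal (by simpa using hw)
  have hne := Measure.ae_ne (gaussianReal 0 (‖w‖ ^ 2).toNNReal) c
  rw [← hlaw] at hne
  exact ae_of_ae_map (innerSL ℝ w).continuous.aemeasurable hne

theorem ae_injOn_inner_stdGaussian (s : Finset E) (θ : E) {ε : ℝ} (hε : ε ≠ 0) :
    ∀ᵐ x ∂stdGaussian E, InjOn (fun y => ⟪y, θ + ε • x⟫) s := by
  have hpair : ∀ y ∈ s, ∀ y' ∈ s, ∀ᵐ x ∂stdGaussian E,
      ⟪y, θ + ε • x⟫ = ⟪y', θ + ε • x⟫ → y = y' := by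
    intro y _ y' _
    rcases eq_or_ne y y' with rfl | hyy'
    · exact Eventually.of_forall fun _ _ => rfl
    filter_upwards [ae_inner_ne_stdGaussian (smul_ne_zero hε (sub_ne_zero.2 hyy')) ⟪y' - y, θ⟫]
      with x hx heq
    refine absurd ?_ hx
    simp only [inner_add_right, real_inner_smul_right, real_inner_smul_left, inner_sub_left]
      at heq ⊢
    linarith
  filter_upwards [(eventually_all_finset s).2 fun y hy => (eventually_all_finset s).2 (hpair y hy)]
    with x hx y hy y' hy' heq using hx y hy y' hy' heq

end Gaussian

theorem hasLaw_stdGaussian_of_map_ofLp {ι : Type*} [Fintype ι] {Ω : Type*} [MeasurableSpace Ω]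
    {μ : Measure Ω} {Z : Ω → EuclideanSpace ℝ ι}
    (hZ : μ.map (fun ω => (Z ω).ofLp) = Measure.pi fun _ : ι => gaussianReal 0 1) :
    HasLaw Z (stdGaussian (EuclideanSpace ℝ ι)) μ := by
  have hcoord : HasLaw (fun ω => (Z ω).ofLp) (Measure.pi fun _ : ι => gaussianReal 0 1) μ := by
    refine ⟨?_, hZ⟩
    by_contra h
    simpa [Measure.map_of_not_aemeasurable h] using congrArg (· Set.univ) hZ
  exact (⟨(WithLp.measurable_toLp 2 _).aemeasurable, map_pi_eq_stdGaussian⟩ :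
    HasLaw (WithLp.toLp 2) (stdGaussian (EuclideanSpace ℝ ι)) _).comp hcoord

/-- Let `Y ⊆ ℝ^d` be a nonempty finite set, `Y_p ⊆ Y` nonempty,
`F(θ) = max_{y ∈ Y} ⟨θ, y⟩` and `F(θ; p) = max_{y ∈ Y_p} ⟨θ, y⟩` (the support functions of
`conv(Y)` and `conv(Y_p)`), `Z` a standard Gaussian on `ℝ^d` and `ε > 0`. Then the perturbed
partial Fenchel–Young loss `L̄_{FY,ε}(θ, p) = E[F(θ + εZ) − F(θ + εZ; p)]` is differentiable
in `θ` with gradient `y*_ε(θ) − y*_ε(θ; p)` where `y*_ε(θ) = E[argmax_{y ∈ Y} ⟨y, θ + εZ⟩]`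
and `y*_ε(θ; p) = E[argmax_{y ∈ Y_p} ⟨y, θ + εZ⟩]`, the argmaxes being almost surely unique
(and represented by arbitrary selections `g`, `gp` that almost surely pick the maximizers). -/
theorem perturbed_partialFY_hasGradientAt_gaussian {d : ℕ}
    (Y Yp : Finset (EuclideanSpace ℝ (Fin d))) (hYp : Yp.Nonempty) (hsub : Yp ⊆ Y)
    {Ω : Type*} [MeasureSpace Ω] [IsProbabilityMeasure (volume : Measure Ω)]
    (Z : Ω → EuclideanSpace ℝ (Fin d))
    (hZ : Measure.map (fun ω => (fun i => Z ω i : Fin d → ℝ)) volume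
        = Measure.pi fun _ : Fin d => gaussianReal 0 1)
    (ε : ℝ) (hε : 0 < ε) (θ : EuclideanSpace ℝ (Fin d)) :
    (∀ᵐ ω, ∃! y, y ∈ Y ∧ ∀ y' ∈ Y, ⟪y', θ + ε • Z ω⟫ ≤ ⟪y, θ + ε • Z ω⟫)
    ∧ (∀ᵐ ω, ∃! y, y ∈ Yp ∧ ∀ y' ∈ Yp, ⟪y', θ + ε • Z ω⟫ ≤ ⟪y, θ + ε • Z ω⟫)
    ∧ ∀ g gp : EuclideanSpace ℝ (Fin d) → EuclideanSpace ℝ (Fin d),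
        (∀ᵐ ω, g (θ + ε • Z ω) ∈ Y ∧
          ∀ y ∈ Y, ⟪y, θ + ε • Z ω⟫ ≤ ⟪g (θ + ε • Z ω), θ + ε • Z ω⟫) →
        (∀ᵐ ω, gp (θ + ε • Z ω) ∈ Yp ∧
          ∀ y ∈ Yp, ⟪y, θ + ε • Z ω⟫ ≤ ⟪gp (θ + ε • Z ω), θ + ε • Z ω⟫) →
        HasGradientAt
          (fun t => ∫ ω,
            (sSup ((fun y => ⟪t + ε • Z ω, y⟫) '' (Y : Set (EuclideanSpace ℝ (Fin d))))
              - sSup ((fun y => ⟪t + ε • Z ω, y⟫) '' (Yp : Set (EuclideanSpace ℝ (Fin d))))))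
          ((∫ ω, g (θ + ε • Z ω)) - ∫ ω, gp (θ + ε • Z ω)) θ := by
  have hlaw := hasLaw_stdGaussian_of_map_ofLp hZ
  have hW : Integrable (fun ω => ε • Z ω) := by
    refine Integrable.smul ε ((integrable_map_measure aestronglyMeasurable_id
      hlaw.aemeasurable).1 ?_)
    rw [hlaw.map_eq]
    exact IsGaussian.integrable_id
  have hinj : ∀ᵐ ω, InjOn (fun y => ⟪y, θ + ε • Z ω⟫) Y :=
    ae_of_ae_map hlaw.aemeasurable (hlaw.map_eq ▸ ae_injOn_inner_stdGaussian Y θ hε.ne')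
  have hinjp : ∀ᵐ ω, InjOn (fun y => ⟪y, θ + ε • Z ω⟫) Yp :=
    hinj.mono fun _ h => h.mono hsub
  refine ⟨hinj.mono fun _ h => Finset.existsUnique_forall_le_of_injOn (hYp.mono hsub) h,
    hinjp.mono fun _ h => Finset.existsUnique_forall_le_of_injOn hYp h, fun g gp hg hgp => ?_⟩
  have hgY : ∫ ω, g (θ + ε • Z ω) = ∫ ω, strictArgmax Y (θ + ε • Z ω) :=
    integral_congr_ae <| by
      filter_upwards [hinj, hg] with ω hω hgω using (strictArgmax_eq_of_injOn hω hgω.1 hgω.2).symm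
  have hgYp : ∫ ω, gp (θ + ε • Z ω) = ∫ ω, strictArgmax Yp (θ + ε • Z ω) :=
    integral_congr_ae <| by
      filter_upwards [hinjp, hgp] with ω hω hgω using (strictArgmax_eq_of_injOn hω hgω.1 hgω.2).symm
  rw [hgY, hgYp]
  refine ((hasGradientAt_integral_supportFun (hYp.mono hsub) hW hinj).fun_sub
    (hasGradientAt_integral_supportFun hYp hW hinjp)).congr_of_eventuallyEq
    (Eventually.of_forall fun t => ?_)
  exact integral_sub (integrable_supportFun_add Y hW t) (integrable_supportFun_add Yp hW t)
end
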